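/- arXiv:2011.03045 — 2 statements merged into one kernel-verified Lean document; each statement's English description precedes it below -/
import Mathlib

section
/- Let E be a complex Hilbert space, ι a type, and for each finite set I ⊆ ι let V(I) be a closed subspace of E with orthogonal projection P_I : E → E onto V(I). Assume that for all finite I, J ⊆ ι and all z ∈ E, P_J(P_I(z)) = P_{I∩J}(z). For z ∈ E and finite I ⊆ ι define z_I := Σ_{K ⊆ I} (−1)^{|I|−|K|} P_K(z). Then for all finite sets I, J ⊆ ι with I \ J ≠ ∅ and all z ∈ E, one has P_J(z_I) = 0. -/
/-!
Fix `a ∈ I \ J`. Since `P_J P_K = P_{K ∩ J}` and `a ∉ J`, the term of `P_J z_I` indexed by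
`K ∌ a` and the one indexed by `insert a K` involve the same vector `P_{K ∩ J} z` with opposite
signs, so they cancel in pairs.
-/

open Finset

theorem Finset.sum_powerset_neg_one_pow_card_sub_smul_eq_zero {R M ι : Type*} [Ring R]
    [AddCommGroup M] [Module R M] [DecidableEq ι] {I : Finset ι} {a : ι} (ha : a ∈ I)
    {f : Finset ι → M} (hf : ∀ K, f (insert a K) = f K) :
    ∑ K ∈ I.powerset, (-1 : R) ^ (#I - #K) • f K = 0 := by
  obtain ⟨s, rfl, has⟩ : ∃ s, I = insert a s ∧ a ∉ s :=
    ⟨I.erase a, (insert_erase ha).symm, notMem_erase a I⟩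
  rw [sum_powerset_insert has, ← sum_add_distrib]
  refine sum_eq_zero fun K hK => ?_
  have haK : a ∉ K := fun h => has (mem_powerset.mp hK h)
  have hcard : #(insert a s) - #K = #(insert a s) - #(insert a K) + 1 := by
    have := card_le_card (mem_powerset.mp hK)
    rw [card_insert_of_notMem has, card_insert_of_notMem haK]
    omega
  rw [hf, hcard, pow_succ, mul_neg_one, neg_smul, neg_add_cancel]

theorem proj_component_eq_zero_general {E : Type*} [NormedAddCommGroup E]
    [InnerProductSpace ℂ E] {ι : Type*} [DecidableEq ι]
    (V : Finset ι → Submodule ℂ E) [∀ I, CompleteSpace (V I)]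
    (hproj : ∀ (I J : Finset ι) (z : E),
      (Submodule.orthogonalProjectionOnto (V J) ((Submodule.orthogonalProjectionOnto (V I) z : E)) : E) =
        (Submodule.orthogonalProjectionOnto (V (I ∩ J)) z : E))
    (I J : Finset ι) (hIJ : (I \ J).Nonempty) (z : E) :
    (Submodule.orthogonalProjectionOnto (V J)
        (∑ K ∈ I.powerset,
          ((-1 : ℂ) ^ (I.card - K.card)) • (Submodule.orthogonalProjectionOnto (V K) z : E)) : E)
      = 0 := by
  obtain ⟨a, ha⟩ := hIJ
  obtain ⟨haI, haJ⟩ := mem_sdiff.mp ha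
  simp_rw [map_sum, Submodule.coe_sum, map_smul, Submodule.coe_smul, hproj]
  exact sum_powerset_neg_one_pow_card_sub_smul_eq_zero haI fun K => by
    rw [insert_inter_of_notMem haJ]

/-- if the orthogonal projections `P_I` onto closed subspaces
`V I` of a complex Hilbert space satisfy `P_J ∘ P_I = P_{I∩J}`, and
`z_I := Σ_{K ⊆ I} (−1)^(|I|−|K|) P_K z`, then `P_J (z_I) = 0` whenever
`I \ J ≠ ∅`. -/
theorem proj_component_eq_zero {E : Type*} [NormedAddCommGroup E]
    [InnerProductSpace ℂ E] [CompleteSpace E] {ι : Type*} [DecidableEq ι]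
    (V : Finset ι → Submodule ℂ E) [∀ I, CompleteSpace (V I)]
    (hproj : ∀ (I J : Finset ι) (z : E),
      (Submodule.orthogonalProjectionOnto (V J) ((Submodule.orthogonalProjectionOnto (V I) z : E)) : E) =
        (Submodule.orthogonalProjectionOnto (V (I ∩ J)) z : E))
    (I J : Finset ι) (hIJ : (I \ J).Nonempty) (z : E) :
    (Submodule.orthogonalProjectionOnto (V J)
        (∑ K ∈ I.powerset,
          ((-1 : ℂ) ^ (I.card - K.card)) • (Submodule.orthogonalProjectionOnto (V K) z : E)) : E)
      = 0 :=
  proj_component_eq_zero_general V hproj I J hIJ z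
end

section
/- Let n ≥ 1, let E be a complex Hilbert space, and for each subset I ⊆ {1, …, n} let V(I) be a closed subspace of E with orthogonal projection P_I : E → E onto V(I). Assume that for all I, J ⊆ {1, …, n} and all w ∈ E, P_J(P_I(w)) = P_{I∩J}(w). Let z ∈ E satisfy z ∈ V({1, …, n}) and P_∅(z) = 0, and for I ⊆ {1, …, n} define z_I := Σ_{K ⊆ I} (−1)^{|I|−|K|} P_K(z); assume moreover that ‖z_I‖ = ‖z_J‖ whenever |I| = |J|. Then for every I ⊆ {1, …, n}, ‖P_I(z)‖² ≤ (|I|/n)·‖z‖². -/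
/-!
The vectors `z_I` are the Efron–Stein components of `z`: Möbius inversion on the subset lattice
gives `P_I z = ∑_{K ⊆ I} z_K`, and the components are pairwise orthogonal because
`⟪P_K z, P_L z⟫ = ⟪z, P_{K ∩ L} z⟫` depends only on `K ∩ L`. Hence
`‖P_I z‖² = ∑_k (|I| choose k) f(k)`, where `f(k)` is the common value of `‖z_K‖²` for `|K| = k`
and `f(0) = ‖P_∅ z‖² = 0`, and the claim follows from `(m choose k) ≤ (m / n) (n choose k)` for
`k ≥ 1`, `m ≤ n`.
-/

open Finset
open scoped InnerProductSpace

section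

variable {ι : Type*}

section EfronStein

variable (R : Type*) {M : Type*} [Ring R] [AddCommGroup M] [Module R M]

def efronSteinComponent (P : Finset ι → M) (I : Finset ι) : M :=
  ∑ K ∈ I.powerset, (-1 : R) ^ (#I - #K) • P K

variable [DecidableEq ι]

theorem efronSteinComponent_eq_zero_of_insert_eq {P : Finset ι → M} {A : Finset ι} {i : ι}
    (hi : i ∈ A) (hP : ∀ K, P (insert i K) = P K) : efronSteinComponent R P A = 0 := by
  have hi' : i ∉ A.erase i := notMem_erase i A
  rw [efronSteinComponent, ← insert_erase hi, sum_powerset_insert hi', ← sum_add_distrib]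
  refine sum_eq_zero fun K hK => ?_
  have hKA : K ⊆ A.erase i := mem_powerset.1 hK
  rw [hP, card_insert_of_notMem hi', card_insert_of_notMem (fun h => hi' (hKA h)),
    Nat.add_sub_add_right, Nat.sub_add_comm (card_le_card hKA), pow_succ, ← add_smul]
  simp

theorem sum_Icc_neg_one_pow_card_sub {L A : Finset ι} (h : L ⊆ A) :
    ∑ K ∈ Icc L A, (-1 : R) ^ (#K - #L) = if L = A then 1 else 0 := by
  have hdisj : ∀ M ∈ (A \ L).powerset, Disjoint L M := fun M hM =>
    disjoint_of_subset_right (mem_powerset.1 hM) disjoint_sdiff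
  rw [Icc_eq_image_powerset h, sum_image fun M hM N hN hMN =>
    by rw [← union_sdiff_cancel_left (hdisj M hM), ← union_sdiff_cancel_left (hdisj N hN), hMN]]
  rw [sum_congr rfl fun M hM => by
    rw [card_union_of_disjoint (hdisj M hM), Nat.add_sub_cancel_left]]
  have := congrArg (Int.cast : ℤ → R) (sum_powerset_neg_one_pow_card (x := A \ L))
  push_cast at this
  rw [this]
  exact if_congr (sdiff_eq_empty_iff_subset.trans
    ⟨fun hAL => subset_antisymm h hAL, fun hLA => hLA ▸ subset_rfl⟩) rfl rfl

theorem sum_powerset_efronSteinComponent (P : Finset ι → M) (A : Finset ι) :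
    ∑ K ∈ A.powerset, efronSteinComponent R P K = P A := by
  simp only [efronSteinComponent]
  rw [sum_comm' (t' := A.powerset) (s' := fun L => Icc L A) fun K L => by
    simp only [mem_powerset, mem_Icc]
    exact ⟨fun ⟨hKA, hLK⟩ => ⟨⟨hLK, hKA⟩, hLK.trans hKA⟩, fun ⟨⟨hLK, hKA⟩, _⟩ => ⟨hKA, hLK⟩⟩]
  simp only [← sum_smul]
  rw [sum_congr rfl fun L hL => by rw [sum_Icc_neg_one_pow_card_sub R (mem_powerset.1 hL)]]
  simp [ite_smul]

end EfronStein

section InnerProduct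

variable {𝕜 E : Type*} [RCLike 𝕜] [SeminormedAddCommGroup E] [InnerProductSpace 𝕜 E]

theorem norm_sum_sq_eq_sum_norm_sq_of_pairwise {α : Type*} {v : α → E}
    (h : Pairwise fun i j => ⟪v i, v j⟫_𝕜 = 0) (s : Finset α) :
    ‖∑ i ∈ s, v i‖ ^ 2 = ∑ i ∈ s, ‖v i‖ ^ 2 := by
  classical
  induction s using Finset.induction_on with
  | empty => simp
  | insert a s ha ih =>
    have horth : ⟪v a, ∑ i ∈ s, v i⟫_𝕜 = 0 := by
      rw [inner_sum]
      exact sum_eq_zero fun j hj => h (ne_of_mem_of_not_mem hj ha).symm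
    rw [sum_insert ha, sum_insert ha, ← ih, sq, sq, sq,
      norm_add_sq_eq_norm_sq_add_norm_sq_of_inner_eq_zero _ _ horth]

theorem inner_efronSteinComponent_right (v : E) (P : Finset ι → E) (A : Finset ι) :
    ⟪v, efronSteinComponent 𝕜 P A⟫_𝕜 = efronSteinComponent 𝕜 (fun K => ⟪v, P K⟫_𝕜) A := by
  simp only [efronSteinComponent, inner_sum, inner_smul_right, smul_eq_mul]

variable [DecidableEq ι]

theorem inner_efronSteinComponent_eq_zero_of_not_subset {P : Finset ι → E} (g : Finset ι → 𝕜)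
    (hg : ∀ K L, ⟪P K, P L⟫_𝕜 = g (K ∩ L)) {A L : Finset ι} (hAL : ¬A ⊆ L) :
    ⟪P L, efronSteinComponent 𝕜 P A⟫_𝕜 = 0 := by
  obtain ⟨i, hiA, hiL⟩ := not_subset.1 hAL
  rw [inner_efronSteinComponent_right]
  exact efronSteinComponent_eq_zero_of_insert_eq 𝕜 hiA fun K => by
    simp only [hg, inter_insert_of_notMem hiL]

theorem inner_efronSteinComponent_eq_zero {P : Finset ι → E} (g : Finset ι → 𝕜)
    (hg : ∀ K L, ⟪P K, P L⟫_𝕜 = g (K ∩ L)) {A B : Finset ι} (hAB : A ≠ B) :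
    ⟪efronSteinComponent 𝕜 P A, efronSteinComponent 𝕜 P B⟫_𝕜 = 0 := by
  have of_not_subset : ∀ {A B}, ¬A ⊆ B →
      ⟪efronSteinComponent 𝕜 P B, efronSteinComponent 𝕜 P A⟫_𝕜 = 0 := fun {A B} hAB => by
    rw [efronSteinComponent, sum_inner]
    refine sum_eq_zero fun L hL => ?_
    rw [inner_smul_left, inner_efronSteinComponent_eq_zero_of_not_subset g hg
      fun hAL => hAB (hAL.trans (mem_powerset.1 hL)), mul_zero]
  by_cases h : A ⊆ B
  · exact of_not_subset fun h' => hAB (subset_antisymm h h')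
  · exact inner_eq_zero_symm.1 (of_not_subset h)

end InnerProduct

theorem Finset.exists_eq_comp_card {α : Type*} (g : Finset ι → α)
    (hg : ∀ K L, #K = #L → g K = g L) : ∃ f : ℕ → α, ∀ K, g K = f #K := by
  classical
  refine ⟨fun k => if h : ∃ K : Finset ι, #K = k then g h.choose else g ∅, fun K => ?_⟩
  have h : ∃ L : Finset ι, #L = #K := ⟨K, rfl⟩
  dsimp only
  rw [dif_pos h]
  exact hg _ _ h.choose_spec.symm

theorem Nat.cast_choose_le_div_mul_choose {m n k : ℕ} (hmn : m ≤ n) (hk : k ≠ 0) :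
    (m.choose k : ℝ) ≤ m / n * n.choose k := by
  obtain ⟨k, rfl⟩ := Nat.exists_eq_succ_of_ne_zero hk
  rcases m with _ | m
  · simp
  obtain ⟨n, rfl⟩ := Nat.exists_eq_succ_of_ne_zero (by omega : n ≠ 0)
  have key : (m + 1).choose (k + 1) * (n + 1) * (k + 1) ≤
      (m + 1) * (n + 1).choose (k + 1) * (k + 1) :=
    calc (m + 1).choose (k + 1) * (n + 1) * (k + 1) = (m + 1) * m.choose k * (n + 1) := by
          rw [Nat.add_one_mul_choose_eq]; ring
      _ ≤ (m + 1) * n.choose k * (n + 1) := by gcongr; omega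
      _ = (m + 1) * (n + 1).choose (k + 1) * (k + 1) := by
          rw [mul_assoc (m + 1) ((n + 1).choose _), ← Nat.add_one_mul_choose_eq]; ring
  rw [div_mul_eq_mul_div, le_div_iff₀ (by positivity)]
  exact_mod_cast Nat.le_of_mul_le_mul_right key k.succ_pos

theorem sum_range_choose_mul_le (f : ℕ → ℝ) {m n : ℕ} (hmn : m ≤ n) (hf0 : f 0 = 0)
    (hf : ∀ k ≤ n, 0 ≤ f k) :
    ∑ k ∈ range (m + 1), (m.choose k : ℝ) * f k ≤
      m / n * ∑ k ∈ range (n + 1), (n.choose k : ℝ) * f k := by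
  have hsub : range (m + 1) ⊆ range (n + 1) := range_subset_range.2 (by omega)
  have hf' : ∀ k ∈ range (n + 1), 0 ≤ f k := fun k hk =>
    hf k (Nat.lt_succ_iff.1 (mem_range.1 hk))
  calc ∑ k ∈ range (m + 1), (m.choose k : ℝ) * f k
      ≤ ∑ k ∈ range (m + 1), m / n * ((n.choose k : ℝ) * f k) := by
        refine sum_le_sum fun k hk => ?_
        rcases eq_or_ne k 0 with rfl | hk0
        · simp [hf0]
        · rw [← mul_assoc]
          exact mul_le_mul_of_nonneg_right (Nat.cast_choose_le_div_mul_choose hmn hk0)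
            (hf' k (hsub hk))
    _ = m / n * ∑ k ∈ range (m + 1), (n.choose k : ℝ) * f k := (mul_sum ..).symm
    _ ≤ m / n * ∑ k ∈ range (n + 1), (n.choose k : ℝ) * f k := by
        gcongr
        exact fun k hk _ => mul_nonneg (Nat.cast_nonneg _) (hf' k hk)

end

theorem norm_proj_le_general {E : Type*} [NormedAddCommGroup E]
    [InnerProductSpace ℂ E] (n : ℕ)
    (V : Finset (Fin n) → Submodule ℂ E) [∀ I, CompleteSpace (V I)]
    (hproj : ∀ (I J : Finset (Fin n)) (w : E),
      (Submodule.orthogonalProjectionOnto (V J) ((Submodule.orthogonalProjectionOnto (V I) w : E)) : E) =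
        (Submodule.orthogonalProjectionOnto (V (I ∩ J)) w : E))
    (z : E) (hz : z ∈ V Finset.univ)
    (hz0 : (Submodule.orthogonalProjectionOnto (V ∅) z : E) = 0)
    (zc : Finset (Fin n) → E)
    (hzc : ∀ I : Finset (Fin n),
      zc I = ∑ K ∈ I.powerset,
        ((-1 : ℂ) ^ (I.card - K.card)) • (Submodule.orthogonalProjectionOnto (V K) z : E))
    (hnorm : ∀ I J : Finset (Fin n), I.card = J.card → ‖zc I‖ = ‖zc J‖)
    (I : Finset (Fin n)) :
    ‖(Submodule.orthogonalProjectionOnto (V I) z : E)‖ ^ 2 ≤ ((I.card : ℝ) / n) * ‖z‖ ^ 2 := by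
  set P : Finset (Fin n) → E := fun K => (V K).starProjection z
  have hzc_eq : zc = efronSteinComponent ℂ P := funext hzc
  have horth : Pairwise fun A B => ⟪zc A, zc B⟫_ℂ = 0 := fun A B hAB => by
    refine hzc_eq ▸ inner_efronSteinComponent_eq_zero (fun K => ⟪z, P K⟫_ℂ) (fun K L => ?_) hAB
    rw [Submodule.inner_starProjection_left_eq_right, inter_comm]
    exact congrArg _ (hproj L K z)
  have hnormP : ∀ A, ‖P A‖ ^ 2 = ∑ K ∈ A.powerset, ‖zc K‖ ^ 2 := fun A => by
    rw [← norm_sum_sq_eq_sum_norm_sq_of_pairwise horth, hzc_eq, sum_powerset_efronSteinComponent]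
  obtain ⟨f, hf⟩ := exists_eq_comp_card (fun K => ‖zc K‖ ^ 2) fun K L h => by rw [hnorm K L h]
  have hsum : ∀ A, ‖P A‖ ^ 2 = ∑ k ∈ range (#A + 1), ((#A).choose k : ℝ) * f k := fun A => by
    simp only [hnormP, hf, sum_powerset_apply_card, nsmul_eq_mul]
  have hf0 : f 0 = 0 := by
    rw [← card_empty, ← hf, hzc]
    simpa using hz0
  have hf_nonneg : ∀ k ≤ n, 0 ≤ f k := fun k hk => by
    obtain ⟨K, -, hK⟩ := exists_subset_card_eq (s := (univ : Finset (Fin n))) (by simpa using hk)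
    rw [← hK, ← hf]
    positivity
  have hz_norm : ‖z‖ ^ 2 = ∑ k ∈ range (n + 1), (n.choose k : ℝ) * f k := by
    rw [← Submodule.starProjection_eq_self_iff.2 hz, hsum univ, card_univ, Fintype.card_fin]
  rw [hz_norm]
  exact (hsum I).trans_le (sum_range_choose_mul_le f (by simpa using card_le_univ I) hf0 hf_nonneg)

/-- with commuting projections indexed by subsets of `{1,…,n}`,
if `z ∈ V(univ)`, `P_∅ z = 0`, and the Efron–Stein components
`z_I := Σ_{K ⊆ I} (−1)^(|I|−|K|) P_K z` satisfy `‖z_I‖ = ‖z_J‖` whenever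
`|I| = |J|`, then `‖P_I z‖² ≤ (|I|/n)·‖z‖²`. -/
theorem norm_proj_le {E : Type*} [NormedAddCommGroup E]
    [InnerProductSpace ℂ E] [CompleteSpace E] (n : ℕ) (hn : 1 ≤ n)
    (V : Finset (Fin n) → Submodule ℂ E) [∀ I, CompleteSpace (V I)]
    (hproj : ∀ (I J : Finset (Fin n)) (w : E),
      (Submodule.orthogonalProjectionOnto (V J) ((Submodule.orthogonalProjectionOnto (V I) w : E)) : E) =
        (Submodule.orthogonalProjectionOnto (V (I ∩ J)) w : E))
    (z : E) (hz : z ∈ V Finset.univ)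
    (hz0 : (Submodule.orthogonalProjectionOnto (V ∅) z : E) = 0)
    (zc : Finset (Fin n) → E)
    (hzc : ∀ I : Finset (Fin n),
      zc I = ∑ K ∈ I.powerset,
        ((-1 : ℂ) ^ (I.card - K.card)) • (Submodule.orthogonalProjectionOnto (V K) z : E))
    (hnorm : ∀ I J : Finset (Fin n), I.card = J.card → ‖zc I‖ = ‖zc J‖)
    (I : Finset (Fin n)) :
    ‖(Submodule.orthogonalProjectionOnto (V I) z : E)‖ ^ 2 ≤ ((I.card : ℝ) / n) * ‖z‖ ^ 2 :=
  norm_proj_le_general n V hproj z hz hz0 zc hzc hnorm I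
end
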